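/- arXiv:1710.00212 — 5 statements merged into one kernel-verified Lean document; each statement's English description precedes it below -/
import Mathlib

section
/- Let 𝔛 be a symmetric association scheme on a finite set X with a faithful spherical embedding with respect to E_1 with m_1 = 3, and suppose the relation R_1 is contained in the maximum inner product relation Γ_α. Then the graph (X, Γ_α) is regular of valency at most 5; consequently the valency k_1 of R_1 satisfies k_1 ∈ {1, 2, 3, 4, 5}. -/
/-!
The Gram matrix of the embedded points is `|X| / m₁ • E`, and `E` is constant on each relation of
the scheme, so `Γ_α` is a union of relations and hence regular. For the bound, fix `x̄` and project
the points `ȳ` with `⟪x̄, ȳ⟫ = α` onto the plane orthogonal to `x̄`: as all their mutual inner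
products are at most `α < ‖x̄‖²`, the projections pairwise make angles larger than `π / 3`, and a
plane holds at most five such directions.
-/

open scoped RealInnerProductSpace

/-- A symmetric association scheme of class `d` on a finite set `X`: a partition of `X × X`
into nonempty relations `R 0, …, R d` with `R 0` the diagonal, each `R i` symmetric, and
well-defined intersection numbers `p^k_{ij}`. -/
structure AssocScheme (X : Type*) [Fintype X] [DecidableEq X] (d : ℕ) where
  R : Fin (d + 1) → X → X → Prop
  R_zero : ∀ x y : X, R 0 x y ↔ x = y
  R_symm : ∀ (i : Fin (d + 1)) (x y : X), R i x y → R i y x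
  R_partition : ∀ x y : X, ∃! i : Fin (d + 1), R i x y
  R_nonempty : ∀ i : Fin (d + 1), ∃ x y : X, R i x y
  pnum : ∀ i j k : Fin (d + 1), ∃ p : ℕ, ∀ x y : X, R k x y →
    Set.ncard {z : X | R i x z ∧ R j z y} = p

variable {X : Type*} [Fintype X] [DecidableEq X] {d : ℕ}

open Classical in
/-- The adjacency matrix of the `i`-th relation of the scheme. -/
noncomputable def AssocScheme.adj (S : AssocScheme X d) (i : Fin (d + 1)) : Matrix X X ℝ :=
  Matrix.of fun x y => if S.R i x y then (1 : ℝ) else 0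

/-- Membership in the Bose–Mesner algebra (the real span of the adjacency matrices). -/
def AssocScheme.inBM (S : AssocScheme X d) (M : Matrix X X ℝ) : Prop :=
  ∃ c : Fin (d + 1) → ℝ, M = ∑ i : Fin (d + 1), c i • S.adj i

/-- The spherical embedding with respect to an idempotent `E`:
`x ↦ √(|X| / rank E) • (E φₓ)`, viewed as a point of the Euclidean space `ℝ^X`
(`φₓ` is the characteristic column vector of `x`, so `E φₓ` is the `x`-th column of `E`). -/
noncomputable def sphEmb (E : Matrix X X ℝ) (x : X) : EuclideanSpace ℝ X :=
  (WithLp.equiv 2 (X → ℝ)).symm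
    fun y => Real.sqrt ((Fintype.card X : ℝ) / (E.rank : ℝ)) * E y x

open Real
open scoped Matrix

theorem Real.half_le_cos_of_abs_le_pi_div_three {t : ℝ} (ht : |t| ≤ π / 3) : 1 / 2 ≤ cos t := by
  rw [← cos_abs, ← cos_pi_div_three]
  exact cos_le_cos_of_nonneg_of_le_pi (abs_nonneg t) (by linarith [pi_pos]) ht

theorem Real.exists_half_le_cos_sub_of_fin_six (θ : Fin 6 → ℝ) (hθ : ∀ i j, θ i - θ j < 2 * π) :
    ∃ i j, i ≠ j ∧ 1 / 2 ≤ cos (θ i - θ j) := by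
  by_contra! h
  set σ := Tuple.sort θ
  have hmono : Monotone (θ ∘ σ) := Tuple.monotone_sort θ
  have gap : ∀ i j : Fin 6, i < j → π / 3 < θ (σ j) - θ (σ i) := by
    intro i j hij
    by_contra! hle
    have h0 : 0 ≤ θ (σ j) - θ (σ i) := sub_nonneg.2 (hmono hij.le)
    exact (h (σ j) (σ i) (σ.injective.ne hij.ne')).not_ge
      (half_le_cos_of_abs_le_pi_div_three (by rwa [abs_of_nonneg h0]))
  have spread : θ (σ 5) - θ (σ 0) < 5 * π / 3 := by
    by_contra! hle
    have h2 := hθ (σ 5) (σ 0)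
    refine (h (σ 5) (σ 0) (σ.injective.ne (by decide))).not_ge ?_
    rw [← cos_sub_two_pi]
    exact half_le_cos_of_abs_le_pi_div_three (by rw [abs_le]; constructor <;> linarith)
  linarith [gap 0 1 (by decide), gap 1 2 (by decide), gap 2 3 (by decide),
    gap 3 4 (by decide), gap 4 5 (by decide)]

theorem Complex.real_inner_eq_norm_mul_norm_mul_cos_arg_sub (w z : ℂ) :
    ⟪w, z⟫ = ‖w‖ * ‖z‖ * Real.cos (arg w - arg z) := by
  rw [Complex.inner, Real.cos_sub, Complex.mul_re, Complex.conj_re, Complex.conj_im,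
    ← norm_mul_cos_arg w, ← norm_mul_cos_arg z, ← norm_mul_sin_arg w, ← norm_mul_sin_arg z]
  ring

theorem Complex.exists_norm_mul_norm_le_two_mul_inner (z : Fin 6 → ℂ) :
    ∃ i j, i ≠ j ∧ ‖z i‖ * ‖z j‖ ≤ 2 * ⟪z i, z j⟫ := by
  obtain ⟨i, j, hij, hcos⟩ := Real.exists_half_le_cos_sub_of_fin_six (fun i => arg (z i))
    fun i j => by linarith [neg_pi_lt_arg (z j), arg_le_pi (z i), pi_pos]
  refine ⟨i, j, hij, ?_⟩
  rw [real_inner_eq_norm_mul_norm_mul_cos_arg_sub]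
  nlinarith [mul_nonneg (norm_nonneg (z i)) (norm_nonneg (z j))]

theorem exists_linearIsometry_of_finrank_le {E F : Type*} [NormedAddCommGroup E]
    [InnerProductSpace ℝ E] [FiniteDimensional ℝ E] [NormedAddCommGroup F]
    [InnerProductSpace ℝ F] [FiniteDimensional ℝ F] (h : Module.finrank ℝ E ≤ Module.finrank ℝ F) :
    Nonempty (E →ₗᵢ[ℝ] F) := by
  let b := stdOrthonormalBasis ℝ E
  let c := stdOrthonormalBasis ℝ F
  let f : E →ₗ[ℝ] F := b.toBasis.constr ℝ fun i => c (Fin.castLE h i)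
  refine ⟨f.isometryOfOrthonormal (v := b.toBasis) (by simp) ?_⟩
  have hf : f ∘ b.toBasis = c ∘ Fin.castLE h := funext fun i => b.toBasis.constr_basis ℝ _ i
  rw [hf]
  exact c.orthonormal.comp _ (Fin.castLE_injective h)

theorem exists_norm_mul_norm_le_two_mul_inner_of_finrank_le_two {W : Type*}
    [NormedAddCommGroup W] [InnerProductSpace ℝ W] [FiniteDimensional ℝ W]
    (hW : Module.finrank ℝ W ≤ 2) (u : Fin 6 → W) :
    ∃ i j, i ≠ j ∧ ‖u i‖ * ‖u j‖ ≤ 2 * ⟪u i, u j⟫ := by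
  obtain ⟨f⟩ := exists_linearIsometry_of_finrank_le (E := W) (F := ℂ)
    (by rwa [Complex.finrank_real_complex])
  obtain ⟨i, j, hij, h⟩ := Complex.exists_norm_mul_norm_le_two_mul_inner (f ∘ u)
  exact ⟨i, j, hij, by simpa only [Function.comp_apply, f.norm_map, f.inner_map_map] using h⟩

theorem exists_lt_inner_of_finrank_le_three {W : Type*}
    [NormedAddCommGroup W] [InnerProductSpace ℝ W] [FiniteDimensional ℝ W]
    (hW : Module.finrank ℝ W ≤ 3) {α : ℝ} (x : W) (y : Fin 6 → W) (hy : ∀ i, ‖y i‖ = ‖x‖)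
    (hxy : ∀ i, ⟪x, y i⟫ = α) (hα : α < ‖x‖ ^ 2) : ∃ i j, i ≠ j ∧ α < ⟪y i, y j⟫ := by
  obtain ⟨ρ, hxρ⟩ : ∃ ρ, ‖x‖ ^ 2 = ρ := ⟨_, rfl⟩
  rw [hxρ] at hα
  have hx : x ≠ 0 := by
    rintro rfl
    simp [← hxy 0, ← hxρ] at hα
  have hρ : 0 < ρ := by rw [← hxρ]; positivity
  have hK : Module.finrank ℝ (ℝ ∙ x)ᗮ ≤ 2 := by
    have := Submodule.finrank_add_finrank_orthogonal (ℝ ∙ x)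
    rw [finrank_span_singleton hx] at this
    omega
  -- `w i` is `ρ` times the projection of `y i` onto `xᗮ`
  let w i := ρ • y i - α • x
  have hwK : ∀ i, w i ∈ (ℝ ∙ x)ᗮ := fun i => by
    rw [Submodule.mem_orthogonal_singleton_iff_inner_right, inner_sub_right,
      real_inner_smul_right, real_inner_smul_right, hxy, real_inner_self_eq_norm_sq, hxρ]
    ring
  have hw : ∀ i j, ⟪w i, w j⟫ = ρ ^ 2 * ⟪y i, y j⟫ - ρ * α ^ 2 := fun i j => by
    simp only [w, inner_sub_left, inner_sub_right, real_inner_smul_left, real_inner_smul_right,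
      hxy, real_inner_comm x]
    rw [real_inner_self_eq_norm_sq, hxρ]
    ring
  have hnorm : ∀ i, ‖w i‖ ^ 2 = ρ * (ρ ^ 2 - α ^ 2) := fun i => by
    rw [← real_inner_self_eq_norm_sq, hw, real_inner_self_eq_norm_sq, hy, hxρ]
    ring
  obtain ⟨i, j, hij, h⟩ := exists_norm_mul_norm_le_two_mul_inner_of_finrank_le_two hK
    fun i => (⟨w i, hwK i⟩ : (ℝ ∙ x)ᗮ)
  simp only [Submodule.coe_norm, Submodule.coe_inner] at h
  have hwij : ‖w i‖ = ‖w j‖ :=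
    (pow_left_inj₀ (norm_nonneg _) (norm_nonneg _) two_ne_zero).1 ((hnorm i).trans (hnorm j).symm)
  rw [← hwij, ← sq, hnorm, hw] at h
  have key : ρ * (ρ - α) ^ 2 ≤ 2 * ρ ^ 2 * (⟪y i, y j⟫ - α) := by linear_combination h
  refine ⟨i, j, hij, sub_pos.1 (pos_of_mul_pos_right (key.trans_lt' ?_) (by positivity))⟩
  exact mul_pos hρ (pow_pos (sub_pos.2 hα) 2)

theorem ncard_setOf_inner_eq_le_five {ι W : Type*} [Finite ι]
    [NormedAddCommGroup W] [InnerProductSpace ℝ W] [FiniteDimensional ℝ W]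
    (hW : Module.finrank ℝ W ≤ 3) {v : ι → W} (hv : Function.Injective v)
    (hnorm : ∀ i j, ‖v i‖ = ‖v j‖) {α : ℝ} (hα : ∀ i j, i ≠ j → ⟪v i, v j⟫ ≤ α) (i : ι) :
    {j | i ≠ j ∧ ⟪v i, v j⟫ = α}.ncard ≤ 5 := by
  by_contra! h
  obtain ⟨t, hts, ht⟩ := Set.exists_subset_card_eq (show 6 ≤ _ from h)
  let e := Finite.equivFinOfCardEq (ht : Nat.card t = 6)
  have hmem : ∀ k, i ≠ e.symm k ∧ ⟪v i, v (e.symm k)⟫ = α := fun k => hts (e.symm k).2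
  have hlt : α < ‖v i‖ ^ 2 := by
    obtain ⟨hne, hinner⟩ := hmem 0
    have hsq : ‖v i - v (e.symm 0)‖ ^ 2 = 2 * (‖v i‖ ^ 2 - α) := by
      rw [norm_sub_sq_real, hinner, hnorm (e.symm 0) i]
      ring
    have : 0 < ‖v i - v (e.symm 0)‖ := norm_pos_iff.2 (sub_ne_zero.2 (hv.ne hne))
    nlinarith
  obtain ⟨k, l, hkl, hkl'⟩ := exists_lt_inner_of_finrank_le_three hW (v i) (fun k => v (e.symm k))
    (fun k => hnorm _ i) (fun k => (hmem k).2) hlt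
  exact hkl'.not_ge (hα _ _ fun h => hkl (e.symm.injective (Subtype.ext h)))

namespace AssocScheme

variable (S : AssocScheme X d)

theorem eq_of_R {i j : Fin (d + 1)} {x y : X} (hi : S.R i x y) (hj : S.R j x y) : i = j :=
  (S.R_partition x y).unique hi hj

theorem eq_zero_iff_eq {i : Fin (d + 1)} {x y : X} (h : S.R i x y) : i = 0 ↔ x = y :=
  ⟨fun hi => (S.R_zero x y).1 (hi ▸ h), fun hxy => S.eq_of_R h ((S.R_zero x y).2 hxy)⟩

theorem exists_ncard_eq (i : Fin (d + 1)) : ∃ k, ∀ x, {y | S.R i x y}.ncard = k := by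
  obtain ⟨k, hk⟩ := S.pnum i i 0
  refine ⟨k, fun x => ?_⟩
  rw [← hk x x ((S.R_zero x x).2 rfl)]
  congr 1
  ext y
  exact ⟨fun h => ⟨h, S.R_symm i x y h⟩, And.left⟩

theorem exists_ncard_eq_of_iff {P : X → X → Prop} (p : Fin (d + 1) → Prop)
    (hP : ∀ i x y, S.R i x y → (P x y ↔ p i)) : ∃ k, ∀ x, {y | P x y}.ncard = k := by
  classical
  choose k hk using S.exists_ncard_eq
  refine ⟨∑ i ∈ Finset.univ.filter p, k i, fun x => ?_⟩
  have hsplit : {y | P x y} =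
      ↑((Finset.univ.filter p).biUnion fun i => Finset.univ.filter (S.R i x)) := by
    ext y
    obtain ⟨i, hi, -⟩ := S.R_partition x y
    simp only [Set.mem_ofPred_eq, Finset.coe_biUnion, Finset.coe_filter, Finset.mem_univ,
      true_and, Set.mem_iUnion, exists_prop, hP i x y hi]
    exact ⟨fun h => ⟨i, h, hi⟩, fun ⟨j, hj, hj'⟩ => S.eq_of_R hj' hi ▸ hj⟩
  rw [hsplit, Set.ncard_coe_finset, Finset.card_biUnion]
  · refine Finset.sum_congr rfl fun i _ => ?_
    rw [← hk i x, ← Set.ncard_coe_finset, Finset.coe_filter]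
    simp
  · intro i _ j _ hij
    exact Finset.disjoint_filter.2 fun y _ hi hj => hij (S.eq_of_R hi hj)

variable {S}

theorem inBM.exists_apply_eq {M : Matrix X X ℝ} (hM : S.inBM M) :
    ∃ c : Fin (d + 1) → ℝ, ∀ i x y, S.R i x y → M x y = c i := by
  obtain ⟨c, rfl⟩ := hM
  refine ⟨c, fun i x y h => ?_⟩
  rw [Matrix.sum_apply, Finset.sum_eq_single i]
  · simp [AssocScheme.adj, h]
  · intro j _ hji
    simp only [AssocScheme.adj, Matrix.smul_apply, Matrix.of_apply, smul_eq_mul,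
      if_neg fun hj => hji (S.eq_of_R hj h), mul_zero]
  · simp

theorem inBM.isSymm {M : Matrix X X ℝ} (hM : S.inBM M) : M.IsSymm := by
  obtain ⟨c, hc⟩ := hM.exists_apply_eq
  refine Matrix.IsSymm.ext fun x y => ?_
  obtain ⟨i, hi, -⟩ := S.R_partition x y
  rw [hc i x y hi, hc i y x (S.R_symm i x y hi)]

theorem inBM.apply_self_eq {M : Matrix X X ℝ} (hM : S.inBM M) (x y : X) : M x x = M y y := by
  obtain ⟨c, hc⟩ := hM.exists_apply_eq
  rw [hc 0 x x ((S.R_zero x x).2 rfl), hc 0 y y ((S.R_zero y y).2 rfl)]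

end AssocScheme

omit [DecidableEq X] in
theorem inner_sphEmb (E : Matrix X X ℝ) (x y : X) :
    ⟪sphEmb E x, sphEmb E y⟫ = Fintype.card X / E.rank * (Eᵀ * E) x y := by
  have hκ : 0 ≤ (Fintype.card X : ℝ) / E.rank := by positivity
  simp only [sphEmb, WithLp.equiv_symm_apply, PiLp.inner_apply, RCLike.inner_apply, conj_trivial,
    Matrix.mul_apply, Matrix.transpose_apply, Finset.mul_sum]
  refine Finset.sum_congr rfl fun z _ => ?_
  linear_combination (E z x * E z y) * Real.mul_self_sqrt hκ

theorem finrank_span_range_sphEmb_le (E : Matrix X X ℝ) :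
    Module.finrank ℝ (Submodule.span ℝ (Set.range (sphEmb E))) ≤ E.rank := by
  let V := (LinearMap.range E.mulVecLin).map (WithLp.linearEquiv 2 ℝ (X → ℝ)).symm.toLinearMap
  have hV : Submodule.span ℝ (Set.range (sphEmb E)) ≤ V := by
    rw [Submodule.span_le]
    rintro _ ⟨x, rfl⟩
    refine ⟨E *ᵥ (Real.sqrt (Fintype.card X / E.rank) • Pi.single x 1), ⟨_, rfl⟩, ?_⟩
    ext y
    simp [sphEmb, Matrix.mulVec_smul]
  calc Module.finrank ℝ (Submodule.span ℝ (Set.range (sphEmb E))) ≤ Module.finrank ℝ V :=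
        Submodule.finrank_mono hV
    _ = E.rank := LinearEquiv.finrank_map_eq _ _

theorem stmt_1_general (S : AssocScheme X d) (E : Matrix X X ℝ)
    (hBM : S.inBM E) (hIdem : E * E = E)
    (hRank : E.rank = 3)
    (hFaithful : Function.Injective (sphEmb E))
    (α : ℝ)
    (hα : IsGreatest {r : ℝ | ∃ x y : X, x ≠ y ∧ ⟪(sphEmb E x), (sphEmb E y)⟫ = r} α)
    (hsub : ∀ x y : X, S.R 1 x y → x ≠ y ∧ ⟪(sphEmb E x), (sphEmb E y)⟫ = α)
    (k₁ : ℕ) (hk : ∀ x : X, Set.ncard {y : X | S.R 1 x y} = k₁) :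
    (∃ k : ℕ, k ≤ 5 ∧
        ∀ x : X, Set.ncard {y : X | x ≠ y ∧ ⟪(sphEmb E x), (sphEmb E y)⟫ = α} = k) ∧
      1 ≤ k₁ ∧ k₁ ≤ 5 := by
  set κ : ℝ := Fintype.card X / E.rank
  have hinner : ∀ x y, ⟪sphEmb E x, sphEmb E y⟫ = κ * E x y := fun x y => by
    rw [inner_sphEmb, hBM.isSymm.eq, hIdem]
  have hnorm : ∀ x y, ‖sphEmb E x‖ = ‖sphEmb E y‖ := fun x y => by
    rw [norm_eq_sqrt_real_inner, norm_eq_sqrt_real_inner, hinner, hinner, hBM.apply_self_eq x y]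
  have hle : ∀ x, {y | x ≠ y ∧ ⟪sphEmb E x, sphEmb E y⟫ = α}.ncard ≤ 5 :=
    ncard_setOf_inner_eq_le_five (hRank ▸ finrank_span_range_sphEmb_le E)
      (v := fun x => (⟨sphEmb E x, Submodule.subset_span ⟨x, rfl⟩⟩ :
        Submodule.span ℝ (Set.range (sphEmb E))))
      (fun x y h => hFaithful (congrArg Subtype.val h)) hnorm
      (fun x y hxy => hα.2 ⟨x, y, hxy, rfl⟩)
  obtain ⟨c, hc⟩ := hBM.exists_apply_eq
  obtain ⟨k, hkα⟩ := S.exists_ncard_eq_of_iff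
    (P := fun x y => x ≠ y ∧ ⟪sphEmb E x, sphEmb E y⟫ = α) (fun i => i ≠ 0 ∧ κ * c i = α)
    fun i x y h => by rw [hinner, hc i x y h, Ne, Ne, S.eq_zero_iff_eq h]
  obtain ⟨x₀, -⟩ := S.R_nonempty 0
  refine ⟨⟨k, hkα x₀ ▸ hle x₀, hkα⟩, ?_, ?_⟩
  · obtain ⟨x, y, hxy⟩ := S.R_nonempty 1
    exact hk x ▸ (Set.ncard_pos (Set.toFinite _)).2 ⟨y, hxy⟩
  · exact hk x₀ ▸ (Set.ncard_le_ncard (fun y => hsub x₀ y) (Set.toFinite _)).trans (hle x₀)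

/-- If a symmetric association scheme has a faithful spherical embedding with respect to a
primitive idempotent `E₁` with `m₁ = 3` and `R₁ ⊆ Γ_α` (the maximum inner product relation),
then the graph `(X, Γ_α)` is regular of valency at most `5`; consequently the valency `k₁`
of `R₁` satisfies `1 ≤ k₁ ≤ 5`. -/
theorem stmt_1 (S : AssocScheme X d) (E : Matrix X X ℝ)
    (hBM : S.inBM E) (hIdem : E * E = E)
    (hPrim : ∀ F : Matrix X X ℝ, S.inBM F → F * F = F → E * F = F → F = 0 ∨ F = E)
    (hRank : E.rank = 3)
    (hFaithful : Function.Injective (sphEmb E))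
    (α : ℝ)
    (hα : IsGreatest {r : ℝ | ∃ x y : X, x ≠ y ∧ ⟪(sphEmb E x), (sphEmb E y)⟫ = r} α)
    (hsub : ∀ x y : X, S.R 1 x y → x ≠ y ∧ ⟪(sphEmb E x), (sphEmb E y)⟫ = α)
    (k₁ : ℕ) (hk : ∀ x : X, Set.ncard {y : X | S.R 1 x y} = k₁) :
    (∃ k : ℕ, k ≤ 5 ∧
        ∀ x : X, Set.ncard {y : X | x ≠ y ∧ ⟪(sphEmb E x), (sphEmb E y)⟫ = α} = k) ∧
      1 ≤ k₁ ∧ k₁ ≤ 5 :=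
  stmt_1_general S E hBM hIdem hRank hFaithful α hα hsub k₁ hk
end

section
/- Let Y be a finite set of at least two distinct unit vectors in ℝ³ and let α = max{⟨x,y⟩ : x, y ∈ Y, x ≠ y} (so α < 1). Then for every x ∈ Y, the number of points y ∈ Y with ⟨x,y⟩ = α is at most 5. -/
/-!
Let `y₁, …, yₙ` be the points of `Y` with `⟪x, yᵢ⟫ = α`. Their components `yᵢ - α • x`
orthogonal to `x` lie in a plane, all have squared norm `1 - α²`, and pairwise have inner product
`⟪yᵢ, yⱼ⟫ - α² ≤ α - α² < (1 - α²) / 2`, the last step being `(1 - α)² > 0`. So the angle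
between any two of them exceeds `π / 3`, and at most five directions in a plane can be pairwise
more than `π / 3` apart.
-/

open scoped RealInnerProductSpace
open Real Module

lemma Real.mem_Ioo_of_cos_lt_half {t : ℝ} (h0 : 0 < t) (h2π : t < 2 * π) (hcos : cos t < 1 / 2) :
    t ∈ Set.Ioo (π / 3) (5 * π / 3) := by
  have hpi := pi_pos
  have h3 := cos_pi_div_three
  constructor
  · by_contra! h
    linarith [cos_le_cos_of_nonneg_of_le_pi h0.le (by linarith) h]
  · by_contra! h
    have := cos_le_cos_of_nonneg_of_le_pi (by linarith) (by linarith) (by linarith :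
      2 * π - t ≤ π / 3)
    linarith [cos_two_pi_sub t]

lemma Real.card_le_five_of_cos_sub_lt_half (s : Finset ℝ) (hs : ∀ a ∈ s, a ∈ Set.Ioc (-π) π)
    (hcos : ∀ a ∈ s, ∀ b ∈ s, a ≠ b → cos (b - a) < 1 / 2) : s.card ≤ 5 := by
  by_contra! h6
  obtain ⟨t, hts, ht⟩ := Finset.exists_subset_card_eq (show 6 ≤ s.card from h6)
  let g := t.orderEmbOfFin ht
  have hg : ∀ i, g i ∈ s := fun i ↦ hts (t.orderEmbOfFin_mem ht i)
  have hgap : ∀ i j : Fin 6, i < j → g j - g i ∈ Set.Ioo (π / 3) (5 * π / 3) := by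
    intro i j hij
    refine mem_Ioo_of_cos_lt_half (sub_pos.2 (g.strictMono hij))
      (by linarith [(hs _ (hg i)).1, (hs _ (hg j)).2]) ?_
    exact hcos _ (hg i) _ (hg j) (g.injective.ne hij.ne)
  -- five consecutive gaps of more than `π / 3` cannot fit in a span of less than `5 π / 3`
  linarith [(hgap 0 1 (by decide)).1, (hgap 1 2 (by decide)).1, (hgap 2 3 (by decide)).1,
    (hgap 3 4 (by decide)).1, (hgap 4 5 (by decide)).1, (hgap 0 5 (by decide)).2]

lemma Complex.inner_eq_norm_mul_norm_mul_cos_arg_sub (z w : ℂ) :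
    ⟪z, w⟫ = ‖z‖ * ‖w‖ * Real.cos (arg w - arg z) := by
  rw [Complex.inner, Real.cos_sub, mul_re, conj_re, conj_im, ← norm_mul_cos_arg z,
    ← norm_mul_cos_arg w, ← norm_mul_sin_arg z, ← norm_mul_sin_arg w]
  ring

lemma Complex.card_le_five_of_inner_lt_half (S : Finset ℂ)
    (h : ∀ z ∈ S, ∀ w ∈ S, z ≠ w → ⟪z, w⟫ < ‖z‖ * ‖w‖ / 2) : S.card ≤ 5 := by
  classical
  have hcos : ∀ z ∈ S, ∀ w ∈ S, z ≠ w → Real.cos (arg w - arg z) < 1 / 2 := by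
    intro z hz w hw hzw
    have := h z hz w hw hzw
    rw [inner_eq_norm_mul_norm_mul_cos_arg_sub] at this
    exact lt_of_mul_lt_mul_left (by linarith) (by positivity : 0 ≤ ‖z‖ * ‖w‖)
  have hinj : Set.InjOn arg S := by
    intro z hz w hw hzw
    by_contra hne
    have := hcos z hz w hw hne
    rw [hzw, sub_self, Real.cos_zero] at this
    norm_num at this
  rw [← Finset.card_image_of_injOn hinj]
  refine card_le_five_of_cos_sub_lt_half _ (by simpa using fun z _ ↦ arg_mem_Ioc z) ?_
  simp only [Finset.mem_image]
  rintro _ ⟨z, hz, rfl⟩ _ ⟨w, hw, rfl⟩ hne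
  exact hcos z hz w hw (ne_of_apply_ne arg hne)

section InnerProductSpace

variable {E : Type*} [NormedAddCommGroup E] [InnerProductSpace ℝ E]

lemma card_le_five_of_inner_lt_half_of_finrank_eq_two (hE : finrank ℝ E = 2) (S : Finset E)
    (h : ∀ u ∈ S, ∀ v ∈ S, u ≠ v → ⟪u, v⟫ < ‖u‖ * ‖v‖ / 2) : S.card ≤ 5 := by
  classical
  have : FiniteDimensional ℝ E := Module.finite_of_finrank_eq_succ hE
  let L : ℂ ≃ₗᵢ[ℝ] E :=
    Complex.isometryOfOrthonormal ((stdOrthonormalBasis ℝ E).reindex (finCongr hE))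
  rw [← Finset.card_image_of_injective S L.symm.injective]
  refine Complex.card_le_five_of_inner_lt_half _ ?_
  simp only [Finset.mem_image]
  rintro _ ⟨u, hu, rfl⟩ _ ⟨v, hv, rfl⟩ hne
  simpa only [LinearIsometryEquiv.inner_map_map, LinearIsometryEquiv.norm_map]
    using h u hu v hv (ne_of_apply_ne L.symm hne)

lemma Submodule.card_le_five_of_inner_lt_half (K : Submodule ℝ E) (hK : finrank ℝ K = 2)
    (S : Finset E) (hSK : ∀ v ∈ S, v ∈ K)
    (h : ∀ u ∈ S, ∀ v ∈ S, u ≠ v → ⟪u, v⟫ < ‖u‖ * ‖v‖ / 2) : S.card ≤ 5 := by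
  classical
  have := card_le_five_of_inner_lt_half_of_finrank_eq_two hK (S.subtype (· ∈ K)) <| by
    simp only [Finset.mem_subtype, Subtype.forall]
    intro u _ hu v _ hv hne
    exact h u hu v hv (Subtype.coe_injective.ne hne)
  rwa [Finset.card_subtype, Finset.filter_true_of_mem hSK] at this

lemma inner_sub_smul_sub_smul_of_inner_eq {x y y' : E} {α : ℝ} (hx : ‖x‖ = 1)
    (hy : ⟪x, y⟫ = α) (hy' : ⟪x, y'⟫ = α) : ⟪y - α • x, y' - α • x⟫ = ⟪y, y'⟫ - α ^ 2 := by
  rw [inner_sub_left, inner_sub_right, inner_sub_right, real_inner_smul_left,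
    real_inner_smul_left, real_inner_smul_right, real_inner_smul_right, real_inner_comm x y, hy,
    hy', real_inner_self_eq_norm_sq, hx]
  ring

lemma card_le_five_of_inner_eq_of_inner_le (hE : finrank ℝ E = 3) {x : E} (hx : ‖x‖ = 1)
    {α : ℝ} (hα : α < 1) (S : Finset E) (hS : ∀ y ∈ S, ‖y‖ = 1 ∧ ⟪x, y⟫ = α)
    (hpair : ∀ y ∈ S, ∀ y' ∈ S, y ≠ y' → ⟪y, y'⟫ ≤ α) : S.card ≤ 5 := by
  classical
  have : Fact (finrank ℝ E = 2 + 1) := ⟨hE⟩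
  have hx0 : x ≠ 0 := norm_ne_zero_iff.1 (by simp [hx])
  have hnorm_sq : ∀ y ∈ S, ‖y - α • x‖ ^ 2 = 1 - α ^ 2 := by
    intro y hy
    rw [← real_inner_self_eq_norm_sq, inner_sub_smul_sub_smul_of_inner_eq hx (hS y hy).2
      (hS y hy).2, real_inner_self_eq_norm_sq, (hS y hy).1]
    ring
  rw [← Finset.card_image_of_injective S (sub_left_injective (b := α • x))]
  refine (ℝ ∙ x)ᗮ.card_le_five_of_inner_lt_half (Submodule.finrank_orthogonal_span_singleton hx0)
    _ ?_ ?_ <;> simp only [Finset.mem_image]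
  · rintro _ ⟨y, hy, rfl⟩
    rw [Submodule.mem_orthogonal_singleton_iff_inner_right, inner_sub_right,
      real_inner_smul_right, (hS y hy).2, real_inner_self_eq_norm_sq, hx]
    ring
  · rintro _ ⟨y, hy, rfl⟩ _ ⟨y', hy', rfl⟩ hne
    have hyy' := hpair y hy y' hy' (ne_of_apply_ne (· - α • x) hne)
    have hnorm : ‖y - α • x‖ = ‖y' - α • x‖ :=
      (pow_left_inj₀ (norm_nonneg _) (norm_nonneg _) two_ne_zero).1
        ((hnorm_sq y hy).trans (hnorm_sq y' hy').symm)
    rw [inner_sub_smul_sub_smul_of_inner_eq hx (hS y hy).2 (hS y' hy').2, ← hnorm, ← sq,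
      hnorm_sq y hy]
    nlinarith [sq_pos_of_pos (sub_pos.2 hα)]

end InnerProductSpace

theorem stmt_2_general (Y : Finset (EuclideanSpace ℝ (Fin 3)))
    (hunit : ∀ x ∈ Y, ‖x‖ = 1) (α : ℝ)
    (hα : IsGreatest {r : ℝ | ∃ x ∈ Y, ∃ y ∈ Y, x ≠ y ∧ ⟪x, y⟫ = r} α) :
    α < 1 ∧ ∀ x ∈ Y, Set.ncard {y : EuclideanSpace ℝ (Fin 3) | y ∈ Y ∧ ⟪x, y⟫ = α} ≤ 5 := by
  obtain ⟨⟨x₀, hx₀, y₀, hy₀, hne, hα₀⟩, hmax⟩ := hα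
  have hα1 : α < 1 :=
    hα₀ ▸ (inner_lt_one_iff_real_of_norm_eq_one (hunit x₀ hx₀) (hunit y₀ hy₀)).2 hne
  refine ⟨hα1, fun x hx ↦ ?_⟩
  have hset : {y | y ∈ Y ∧ ⟪x, y⟫ = α} = ↑(Y.filter (⟪x, ·⟫ = α)) := by
    ext; simp
  rw [hset, Set.ncard_coe_finset]
  refine card_le_five_of_inner_eq_of_inner_le finrank_euclideanSpace_fin (hunit x hx) hα1 _
    (fun y hy ↦ ?_) (fun y hy y' hy' hne ↦ ?_)
  · exact ⟨hunit y (Finset.mem_filter.1 hy).1, (Finset.mem_filter.1 hy).2⟩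
  · exact hmax ⟨y, (Finset.mem_filter.1 hy).1, y', (Finset.mem_filter.1 hy').1, hne, rfl⟩

/-- For a finite set `Y` of at least two unit vectors in `ℝ³` with maximum pairwise inner
product `α` (so `α < 1`), every `x ∈ Y` has at most `5` points `y ∈ Y` with `⟪x, y⟫ = α`. -/
theorem stmt_2 (Y : Finset (EuclideanSpace ℝ (Fin 3))) (hY : 2 ≤ Y.card)
    (hunit : ∀ x ∈ Y, ‖x‖ = 1) (α : ℝ)
    (hα : IsGreatest {r : ℝ | ∃ x ∈ Y, ∃ y ∈ Y, x ≠ y ∧ ⟪x, y⟫ = r} α) :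
    α < 1 ∧ ∀ x ∈ Y, Set.ncard {y : EuclideanSpace ℝ (Fin 3) | y ∈ Y ∧ ⟪x, y⟫ = α} ≤ 5 :=
  stmt_2_general Y hunit α hα
end

section
/- Let X be a faithful spherical embedding of a symmetric association scheme 𝔛 with respect to the primitive idempotent E_1, and let R_1 ≠ R_0 be a relation of 𝔛 with valency k_1 = 1 such that R_1 is contained in the maximum inner product relation Γ_α. Then |X| = 2. -/
open scoped RealInnerProductSpace

variable {X : Type*} [Fintype X] [DecidableEq X] {d : ℕ}

/-!
Valency one makes `A₁` the permutation matrix of a fixed-point-free involution `σ`, so `A₁² = I`.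
As the Bose–Mesner algebra is commutative, `E (I + A₁) / 2` is an idempotent of it absorbed by the
primitive `E`, which forces `E A₁ = ±E`: the embedding sends `σ x` to `±x̄`. Faithfulness excludes
`+`. With `-`, `α = ⟨x̄, -x̄⟩ = -‖x̄‖²` for every `x`, so `‖x̄ + ȳ‖² ≤ 0` whenever `x ≠ y`:
any two distinct points are antipodal, and there can be only two of them.
-/

open scoped Matrix

namespace AssocScheme

variable (S : AssocScheme X d)

theorem eq_zero_of_R_self {i : Fin (d + 1)} {x : X} (h : S.R i x x) : i = 0 :=
  (S.R_partition x x).unique h ((S.R_zero x x).2 rfl)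

theorem adj_transpose (i : Fin (d + 1)) : (S.adj i)ᵀ = S.adj i := by
  ext x y
  simp only [Matrix.transpose_apply, adj, Matrix.of_apply]
  congr 1
  exact propext ⟨S.R_symm i y x, S.R_symm i x y⟩

theorem adj_mul_adj_apply (i j : Fin (d + 1)) (x y : X) :
    (S.adj i * S.adj j) x y = {z | S.R i x z ∧ S.R j z y}.ncard := by
  classical
  simp only [Matrix.mul_apply, adj, Matrix.of_apply, ite_zero_mul_ite_zero, mul_one,
    Finset.sum_boole, Set.ncard_eq_toFinset_card', Set.toFinset_ofPred]

theorem sum_smul_adj_apply (c : Fin (d + 1) → ℝ) {k : Fin (d + 1)} {x y : X}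
    (h : S.R k x y) : (∑ i, c i • S.adj i) x y = c k := by
  classical
  rw [Matrix.sum_apply, Finset.sum_eq_single k]
  · simp [adj, h]
  · intro i _ hik
    have hi : ¬S.R i x y := fun hi => hik ((S.R_partition x y).unique hi h)
    simp [adj, hi]
  · simp

theorem inBM_iff_mem_span {M : Matrix X X ℝ} :
    S.inBM M ↔ M ∈ Submodule.span ℝ (Set.range S.adj) := by
  rw [Submodule.mem_span_range_iff_exists_fun]
  exact ⟨fun ⟨c, hc⟩ => ⟨c, hc.symm⟩, fun ⟨c, hc⟩ => ⟨c, hc.symm⟩⟩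

theorem inBM_adj (i : Fin (d + 1)) : S.inBM (S.adj i) :=
  S.inBM_iff_mem_span.2 (Submodule.subset_span ⟨i, rfl⟩)

theorem inBM_of_forall_R {M : Matrix X X ℝ} (c : Fin (d + 1) → ℝ)
    (h : ∀ k x y, S.R k x y → M x y = c k) : S.inBM M := by
  refine ⟨c, Matrix.ext fun x y => ?_⟩
  obtain ⟨k, hk, -⟩ := S.R_partition x y
  rw [h k x y hk, S.sum_smul_adj_apply c hk]

theorem inBM_adj_mul_adj (i j : Fin (d + 1)) : S.inBM (S.adj i * S.adj j) := by
  choose p hp using S.pnum i j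
  exact S.inBM_of_forall_R (fun k => p k) fun k x y h => by rw [adj_mul_adj_apply, hp k x y h]

variable {S}

theorem inBM.add {M N : Matrix X X ℝ} (hM : S.inBM M) (hN : S.inBM N) : S.inBM (M + N) :=
  S.inBM_iff_mem_span.2 (add_mem (S.inBM_iff_mem_span.1 hM) (S.inBM_iff_mem_span.1 hN))

theorem inBM.smul {M : Matrix X X ℝ} (hM : S.inBM M) (a : ℝ) : S.inBM (a • M) :=
  S.inBM_iff_mem_span.2 (Submodule.smul_mem _ a (S.inBM_iff_mem_span.1 hM))

theorem inBM.mul {M N : Matrix X X ℝ} (hM : S.inBM M) (hN : S.inBM N) : S.inBM (M * N) := by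
  obtain ⟨c, rfl⟩ := hM
  obtain ⟨e, rfl⟩ := hN
  rw [S.inBM_iff_mem_span, Finset.sum_mul]
  refine Submodule.sum_mem _ fun i _ => ?_
  rw [Finset.mul_sum]
  refine Submodule.sum_mem _ fun j _ => ?_
  rw [smul_mul_smul_comm]
  exact Submodule.smul_mem _ _ (S.inBM_iff_mem_span.1 (S.inBM_adj_mul_adj i j))

theorem inBM.transpose_eq {M : Matrix X X ℝ} (hM : S.inBM M) : Mᵀ = M := by
  obtain ⟨c, rfl⟩ := hM
  simp only [Matrix.transpose_sum, Matrix.transpose_smul, adj_transpose]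

theorem inBM.mul_comm {M N : Matrix X X ℝ} (hM : S.inBM M) (hN : S.inBM N) :
    M * N = N * M := by
  rw [← (hM.mul hN).transpose_eq, Matrix.transpose_mul, hN.transpose_eq, hM.transpose_eq]

theorem mul_eq_self_or_neg_of_mul_self_eq_one {E P : Matrix X X ℝ} (hE : S.inBM E)
    (hEE : E * E = E)
    (hPrim : ∀ F : Matrix X X ℝ, S.inBM F → F * F = F → E * F = F → F = 0 ∨ F = E)
    (hP : S.inBM P) (hPP : P * P = 1) : E * P = E ∨ E * P = -E := by
  have hPE : P * E = E * P := hP.mul_comm hE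
  have hEPE : E * P * E = E * P := by rw [mul_assoc, hPE, ← mul_assoc, hEE]
  have hEPEP : E * P * (E * P) = E := by
    rw [← mul_assoc, hEPE, mul_assoc, hPP, mul_one]
  have hF : S.inBM ((2⁻¹ : ℝ) • (E + E * P)) := (hE.add (hE.mul hP)).smul _
  have hFF : ((2⁻¹ : ℝ) • (E + E * P)) * ((2⁻¹ : ℝ) • (E + E * P)) =
      (2⁻¹ : ℝ) • (E + E * P) := by
    rw [smul_mul_smul_comm, add_mul, mul_add, mul_add, hEE, ← mul_assoc E E P, hEE, hEPE,
      hEPEP]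
    module
  have hEF : E * ((2⁻¹ : ℝ) • (E + E * P)) = (2⁻¹ : ℝ) • (E + E * P) := by
    rw [Matrix.mul_smul, mul_add, hEE, ← mul_assoc, hEE]
  rcases hPrim _ hF hFF hEF with h | h
  · right
    linear_combination (norm := module) (2 : ℝ) • h
  · left
    linear_combination (norm := module) (2 : ℝ) • h

variable {i : Fin (d + 1)} {σ : X → X}

theorem mul_adj_apply_of_R_iff (hσ : ∀ x y, S.R i x y ↔ y = σ x) (M : Matrix X X ℝ)
    (x y : X) : (M * S.adj i) x y = M x (σ y) := by
  have hR : ∀ z, S.R i z y ↔ z = σ y := fun z =>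
    ⟨fun h => (hσ y z).1 (S.R_symm i z y h), fun h => S.R_symm i y z ((hσ y z).2 h)⟩
  simp [Matrix.mul_apply, adj, hR]

theorem adj_mul_self_of_R_iff (hσ : ∀ x y, S.R i x y ↔ y = σ x) : S.adj i * S.adj i = 1 := by
  have hσσ : Function.Involutive σ := fun x =>
    ((hσ (σ x) x).1 (S.R_symm i x (σ x) ((hσ x (σ x)).2 rfl))).symm
  ext x y
  rw [mul_adj_apply_of_R_iff hσ]
  simp [adj, hσ, Matrix.one_apply, hσσ.injective.eq_iff, eq_comm]

end AssocScheme

theorem sphEmb_eq_smul_of_apply_eq {Y : Type*} [Fintype Y] {E : Matrix Y Y ℝ} {x x' : Y} {c : ℝ}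
    (h : ∀ y, E y x' = c * E y x) : sphEmb E x' = c • sphEmb E x := by
  ext y
  simp only [sphEmb, WithLp.equiv_symm_apply, PiLp.smul_apply, h, smul_eq_mul]
  ring

theorem eq_neg_of_norm_sq_eq_of_inner_le {V : Type*} [NormedAddCommGroup V]
    [InnerProductSpace ℝ V] {u w : V} {r : ℝ} (hu : ‖u‖ ^ 2 = r) (hw : ‖w‖ ^ 2 = r)
    (h : ⟪u, w⟫ ≤ -r) : w = -u := by
  have : ‖u + w‖ ^ 2 ≤ 0 := by rw [norm_add_sq_real]; linarith
  rw [eq_neg_iff_add_eq_zero, add_comm, ← norm_eq_zero]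
  exact pow_eq_zero_iff two_ne_zero |>.1 (le_antisymm this (sq_nonneg _))

theorem Fintype.card_eq_two_of_injective_of_eq_neg {ι V : Type*} [Fintype ι] [AddGroup V]
    {v : ι → V} (hv : Function.Injective v) {a b : ι} (hab : a ≠ b)
    (h : ∀ x y, x ≠ y → v y = -v x) : Fintype.card ι = 2 := by
  rw [← Nat.card_eq_fintype_card, Nat.card_eq_two_iff' a]
  exact ⟨b, hab.symm, fun z hz => hv ((h a z hz.symm).trans (h a b hab).symm)⟩

/-- If `X` has a faithful spherical embedding with respect to a primitive idempotent `E₁`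
and `R₁ ≠ R₀` is a relation with valency `k₁ = 1` contained in the maximum inner product
relation `Γ_α`, then `|X| = 2`. -/
theorem stmt_8 (S : AssocScheme X d) (E : Matrix X X ℝ)
    (hBM : S.inBM E) (hIdem : E * E = E)
    (hPrim : ∀ F : Matrix X X ℝ, S.inBM F → F * F = F → E * F = F → F = 0 ∨ F = E)
    (hFaithful : Function.Injective (sphEmb E))
    (hne : S.R 1 ≠ S.R 0)
    (hk : ∀ x : X, Set.ncard {y : X | S.R 1 x y} = 1)
    (α : ℝ)
    (hα : IsGreatest {r : ℝ | ∃ x y : X, x ≠ y ∧ ⟪(sphEmb E x), (sphEmb E y)⟫ = r} α)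
    (hsub : ∀ x y : X, S.R 1 x y → x ≠ y ∧ ⟪(sphEmb E x), (sphEmb E y)⟫ = α) :
    Fintype.card X = 2 := by
  choose σ hσ using fun x => Set.ncard_eq_one.1 (hk x)
  have hR : ∀ x y, S.R 1 x y ↔ y = σ x := fun x y => Set.ext_iff.1 (hσ x) y
  have hσne : ∀ x, σ x ≠ x := fun x h =>
    hne (congrArg S.R (S.eq_zero_of_R_self (h ▸ (hR x (σ x)).2 rfl)))
  have hcol : ∀ x y, (E * S.adj 1) y x = E y (σ x) := fun x y =>
    S.mul_adj_apply_of_R_iff hR E y x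
  obtain ⟨a, -⟩ := S.R_nonempty 1
  rcases S.mul_eq_self_or_neg_of_mul_self_eq_one hBM hIdem hPrim (S.inBM_adj 1)
    (S.adj_mul_self_of_R_iff hR) with hEA | hEA
  · refine absurd (hFaithful ?_) (hσne a)
    simpa using sphEmb_eq_smul_of_apply_eq (c := 1) fun y => by simp [← hcol, hEA]
  · have hanti : ∀ x, sphEmb E (σ x) = -sphEmb E x := fun x => by
      simpa using sphEmb_eq_smul_of_apply_eq (c := -1) fun y => by simp [← hcol, hEA]
    have hnorm : ∀ x, ‖sphEmb E x‖ ^ 2 = -α := fun x => by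
      rw [← (hsub x (σ x) ((hR x _).2 rfl)).2, hanti, inner_neg_right,
        real_inner_self_eq_norm_sq, neg_neg]
    exact Fintype.card_eq_two_of_injective_of_eq_neg hFaithful (hσne a).symm fun x y hxy =>
      eq_neg_of_norm_sq_eq_of_inner_le (hnorm x) (hnorm y) (by simpa using hα.2 ⟨x, y, hxy, rfl⟩)
end

section
/- Let x, y, z be unit vectors in a real inner product space and let θ be a real number with 0 < θ ≤ π/2. If ⟨x,y⟩ = cos θ, ⟨y,z⟩ = cos θ, and ⟨x,z⟩ = cos 2θ, then z = 2cos θ · y − x; in particular, x, y, z lie in a common 2-dimensional linear subspace. -/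
open scoped RealInnerProductSpace

/-- If `x, y, z` are unit vectors in a real inner product space with `⟪x, y⟫ = cos θ`,
`⟪y, z⟫ = cos θ`, `⟪x, z⟫ = cos 2θ` for some `0 < θ ≤ π/2`, then `z = 2 cos θ • y - x`;
in particular `x, y, z` lie in a common 2-dimensional linear subspace. -/
theorem stmt_13 {F : Type*} [NormedAddCommGroup F] [InnerProductSpace ℝ F]
    (x y z : F) (hx : ‖x‖ = 1) (hy : ‖y‖ = 1) (hz : ‖z‖ = 1)
    (θ : ℝ) (hθ0 : 0 < θ) (hθ1 : θ ≤ Real.pi / 2)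
    (hxy : ⟪x, y⟫ = Real.cos θ) (hyz : ⟪y, z⟫ = Real.cos θ)
    (hxz : ⟪x, z⟫ = Real.cos (2 * θ)) :
    z = (2 * Real.cos θ) • y - x ∧
      ∃ u v : F, x ∈ Submodule.span ℝ ({u, v} : Set F) ∧
        y ∈ Submodule.span ℝ ({u, v} : Set F) ∧
        z ∈ Submodule.span ℝ ({u, v} : Set F) := by
  have hxx : ⟪x, x⟫ = 1 := by
    rw [real_inner_self_eq_norm_sq, hx]; norm_num
  have hyy : ⟪y, y⟫ = 1 := by
    rw [real_inner_self_eq_norm_sq, hy]; norm_num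
  have hzz : ⟪z, z⟫ = 1 := by
    rw [real_inner_self_eq_norm_sq, hz]; norm_num
  have hyx : ⟪y, x⟫ = Real.cos θ := by rw [real_inner_comm]; exact hxy
  have hzy : ⟪z, y⟫ = Real.cos θ := by rw [real_inner_comm]; exact hyz
  have hzx : ⟪z, x⟫ = Real.cos (2 * θ) := by rw [real_inner_comm]; exact hxz
  have key : z = (2 * Real.cos θ) • y - x := by
    have h0 : ⟪z - ((2 * Real.cos θ) • y - x), z - ((2 * Real.cos θ) • y - x)⟫ = 0 := by
      simp only [inner_sub_left, inner_sub_right, inner_add_left, inner_add_right,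
        inner_smul_left, inner_smul_right, real_inner_comm x y, real_inner_comm y z,
        real_inner_comm x z, RCLike.conj_to_real]
      rw [hxx, hyy, hzz, hxy, hyz, hxz, Real.cos_two_mul]
      ring
    have := inner_self_eq_zero.mp h0
    rw [sub_eq_zero] at this
    exact this
  refine ⟨key, x, y, ?_, ?_, ?_⟩
  · exact Submodule.subset_span (by simp)
  · exact Submodule.subset_span (by simp)
  · rw [key]
    exact sub_mem (Submodule.smul_mem _ _ (Submodule.subset_span (by simp)))
      (Submodule.subset_span (by simp))
end

section
/- Let X = {(ε_1, ε_2, ε_3)/√3 : ε_i ∈ {1, −1}} ⊂ S² be the vertex set of the cube inscribed in the unit sphere, whose maximum pairwise inner product is α = 1/3. Then for every unit vector y ∈ S² with y ∉ X, there exists x ∈ X with ⟨x,y⟩ > 1/3; i.e., adjoining any new point of S² to X strictly increases the maximum pairwise inner product. -/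
open scoped RealInnerProductSpace

/- The inner product of two distinct vertices is a sum of three terms `±1/3`, at least one of which
(a coordinate where they differ) is `-1/3`; so it is at most `1/3`, attained by vertices differing in
one coordinate. For a unit vector `y`, the vertex `x` with the signs of the coordinates of `y` gives
`⟪x, y⟫ = (∑ |yᵢ|) / √3 ≥ ‖y‖ / √3 = 1/√3 > 1/3`. -/

/-- Vertex set of the cube inscribed in the unit sphere:
the eight points `(ε₁, ε₂, ε₃)/√3`, `εᵢ ∈ {±1}`. -/
noncomputable def cube : Set (EuclideanSpace ℝ (Fin 3)) :=
  {v | ∀ i, v i = (Real.sqrt 3)⁻¹ ∨ v i = -(Real.sqrt 3)⁻¹}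

lemma EuclideanSpace.norm_le_sum_abs {ι : Type*} [Fintype ι] (y : EuclideanSpace ℝ ι) :
    ‖y‖ ≤ ∑ i, |y i| := by
  refine le_of_pow_le_pow_left₀ two_ne_zero (Finset.sum_nonneg fun i _ ↦ abs_nonneg (y i)) ?_
  rw [EuclideanSpace.real_norm_sq_eq]
  simpa only [sq_abs] using
    Finset.sum_sq_le_sq_sum_of_nonneg (s := Finset.univ) fun i _ ↦ abs_nonneg (y i)

noncomputable def signVector {ι : Type*} (c : ℝ) (y : EuclideanSpace ℝ ι) : EuclideanSpace ℝ ι :=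
  WithLp.toLp 2 fun i ↦ if 0 ≤ y i then c else -c

lemma inner_signVector {ι : Type*} [Fintype ι] (c : ℝ) (y : EuclideanSpace ℝ ι) :
    ⟪signVector c y, y⟫ = c * ∑ i, |y i| := by
  rw [PiLp.inner_apply, Finset.mul_sum]
  refine Finset.sum_congr rfl fun i _ ↦ ?_
  by_cases hy : 0 ≤ y i
  · simp [signVector, hy, abs_of_nonneg hy, mul_comm]
  · simp [signVector, hy, abs_of_neg (not_le.mp hy), mul_comm]

lemma signVector_mem_cube (y : EuclideanSpace ℝ (Fin 3)) :
    signVector (Real.sqrt 3)⁻¹ y ∈ cube := fun i ↦ by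
  by_cases hy : 0 ≤ y i <;> simp [signVector, hy]

lemma inv_sqrt_three_sq : (Real.sqrt 3)⁻¹ ^ 2 = 1 / 3 := by
  rw [inv_pow, Real.sq_sqrt (by norm_num), one_div]

lemma one_third_lt_inv_sqrt_three : 1 / 3 < (Real.sqrt 3)⁻¹ := by
  have h := inv_sqrt_three_sq
  nlinarith [inv_pos.mpr (Real.sqrt_pos.mpr (by norm_num : (0 : ℝ) < 3))]

lemma sq_apply_of_mem_cube {x : EuclideanSpace ℝ (Fin 3)} (hx : x ∈ cube) (i : Fin 3) :
    x i ^ 2 = 1 / 3 := by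
  rcases hx i with h | h <;> rw [h] <;> simp

lemma apply_eq_neg_of_mem_cube {x y : EuclideanSpace ℝ (Fin 3)} (hx : x ∈ cube) (hy : y ∈ cube)
    {i : Fin 3} (hne : x i ≠ y i) : y i = -x i := by
  rcases hx i with h | h <;> rcases hy i with h' | h' <;> simp_all

lemma mul_apply_le_of_mem_cube {x y : EuclideanSpace ℝ (Fin 3)} (hx : x ∈ cube) (hy : y ∈ cube)
    (i : Fin 3) : x i * y i ≤ 1 / 3 := by
  nlinarith [sq_apply_of_mem_cube hx i, sq_apply_of_mem_cube hy i, sq_nonneg (x i - y i)]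

lemma inner_le_of_mem_cube {x y : EuclideanSpace ℝ (Fin 3)} (hx : x ∈ cube) (hy : y ∈ cube)
    (hxy : x ≠ y) : ⟪x, y⟫ ≤ 1 / 3 := by
  obtain ⟨j, hj⟩ : ∃ j, x j ≠ y j := by
    by_contra! h
    exact hxy (PiLp.ext h)
  have hneg : x j * y j = -(1 / 3) := by
    rw [apply_eq_neg_of_mem_cube hx hy hj, mul_neg, ← sq, sq_apply_of_mem_cube hx]
  have hrest : ∑ i ∈ Finset.univ.erase j, x i * y i ≤ 2 * (1 / 3) := by
    have h := Finset.sum_le_card_nsmul (Finset.univ.erase j) (fun i ↦ x i * y i) (1 / 3)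
      fun i _ ↦ mul_apply_le_of_mem_cube hx hy i
    rwa [Finset.card_erase_of_mem (Finset.mem_univ j), Finset.card_univ, Fintype.card_fin,
      nsmul_eq_mul] at h
  rw [real_inner_comm, PiLp.inner_apply, ← Finset.add_sum_erase _ _ (Finset.mem_univ j)]
  simp only [RCLike.inner_apply, conj_trivial]
  linarith

lemma exists_mem_cube_inner_eq_one_third :
    ∃ x ∈ cube, ∃ y ∈ cube, x ≠ y ∧ ⟪x, y⟫ = 1 / 3 := by
  set s := (Real.sqrt 3)⁻¹
  have hs : 0 < s := inv_pos.mpr (Real.sqrt_pos.mpr (by norm_num))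
  refine ⟨WithLp.toLp 2 ![s, s, s], ?_, WithLp.toLp 2 ![s, s, -s], ?_, ?_, ?_⟩
  · intro i; fin_cases i <;> simp [s]
  · intro i; fin_cases i <;> simp [s]
  · intro h
    have := congrArg (· 2) h
    simp only [Fin.isValue, Matrix.cons_val] at this
    linarith
  · simp [PiLp.inner_apply, Fin.sum_univ_three]
    linarith [inv_sqrt_three_sq]

/-- The cube (vertices `(±1,±1,±1)/√3`) inscribed in the unit sphere has maximum pairwise inner product `α = 1 / 3`,
and adjoining any new unit vector strictly increases the maximum pairwise inner product:
every unit vector `y ∉ X` has `⟪x, y⟫ > α` for some vertex `x`. -/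
theorem stmt_15 :
    IsGreatest {r : ℝ | ∃ x ∈ cube, ∃ y ∈ cube, x ≠ y ∧ ⟪x, y⟫ = r} (1 / 3) ∧
      ∀ y : EuclideanSpace ℝ (Fin 3), ‖y‖ = 1 → y ∉ cube →
        ∃ x ∈ cube, ⟪x, y⟫ > (1 / 3) := by
  refine ⟨⟨exists_mem_cube_inner_eq_one_third, ?_⟩, fun y hy _ ↦ ?_⟩
  · rintro r ⟨x, hx, y, hy, hxy, rfl⟩
    exact inner_le_of_mem_cube hx hy hxy
  · refine ⟨signVector (Real.sqrt 3)⁻¹ y, signVector_mem_cube y, ?_⟩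
    calc 1 / 3 < (Real.sqrt 3)⁻¹ * ‖y‖ := by rw [hy, mul_one]; exact one_third_lt_inv_sqrt_three
      _ ≤ (Real.sqrt 3)⁻¹ * ∑ i, |y i| := by gcongr; exact y.norm_le_sum_abs
      _ = ⟪signVector (Real.sqrt 3)⁻¹ y, y⟫ := (inner_signVector _ y).symm
end
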